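/- Second-order inequality for the φ-transform: let μ be a probability measure on the real line with bounded support contained in [0, ∞) and b = sup supp(μ). Then for every x > b, 2·φ_μ'(x;1)² ≤ φ_μ(x;1)·(φ_μ''(x;1) − 2·∫ (t²/x)/(x²−t²)² dμ(t)), where the primes denote derivatives in x. -/

import Mathlib

/-!
Second-order inequality for the φ-transform: let `μ` be a probability measure on the real
line with bounded support contained in `[0, ∞)` and `b = sup supp(μ)`.  With
`φ_μ(z;1) = ∫ z/(z²−t²) dμ(t)`, `φ_μ'(z;1) = −∫ (z²+t²)/(z²−t²)² dμ(t)` and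
`φ_μ''(z;1) = 2 ∫ z(z²+3t²)/(z²−t²)³ dμ(t)`, we have for every `x > b`:
`2 φ_μ'(x;1)² ≤ φ_μ(x;1) (φ_μ''(x;1) − 2 ∫ (t²/x)/(x²−t²)² dμ(t))`.
-/

open MeasureTheory Set

noncomputable def phiOne (μ : Measure ℝ) (z : ℝ) : ℝ := ∫ t, z / (z ^ 2 - t ^ 2) ∂μ

noncomputable def phiOne' (μ : Measure ℝ) (z : ℝ) : ℝ :=
  -∫ t, (z ^ 2 + t ^ 2) / (z ^ 2 - t ^ 2) ^ 2 ∂μ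

noncomputable def phiOne'' (μ : Measure ℝ) (z : ℝ) : ℝ :=
  2 * ∫ t, z * (z ^ 2 + 3 * t ^ 2) / (z ^ 2 - t ^ 2) ^ 3 ∂μ

set_option maxHeartbeats 1000000 in
theorem phi_second_order_inequality (μ : Measure ℝ) [IsProbabilityMeasure μ] (b : ℝ)
    (hlow : μ (Set.Iio 0) = 0) (hhigh : μ (Set.Ioi b) = 0)
    (hbsup : ∀ ε > 0, 0 < μ (Set.Ioc (b - ε) b))
    (x : ℝ) (hx : b < x) :
    2 * (phiOne' μ x) ^ 2 ≤
      phiOne μ x * (phiOne'' μ x - 2 * ∫ t, (t ^ 2 / x) / (x ^ 2 - t ^ 2) ^ 2 ∂μ) := by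
  -- b is nonnegative
  have hb0 : 0 ≤ b := by
    by_contra hb
    push_neg at hb
    have h1 : 0 < μ (Set.Ioc (b - 1) b) := hbsup 1 one_pos
    have h2 : Set.Ioc (b - 1) b ⊆ Set.Iio 0 := fun t ht => lt_of_le_of_lt ht.2 hb
    have := (measure_mono h2).trans_eq hlow
    rw [le_zero_iff] at this
    exact absurd this h1.ne'
  have hx0 : 0 < x := lt_of_le_of_lt hb0 hx
  -- almost every point is in [0, b]
  have hae : ∀ᵐ t ∂μ, t ∈ Set.Icc 0 b := by
    have hcompl : (Set.Icc (0:ℝ) b)ᶜ ⊆ Set.Iio 0 ∪ Set.Ioi b := by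
      intro t ht
      simp only [Set.mem_compl_iff, Set.mem_Icc, not_and_or, not_le] at ht
      rcases ht with h | h
      · exact Or.inl h
      · exact Or.inr h
    rw [MeasureTheory.ae_iff]
    refine le_antisymm ?_ zero_le
    calc μ {t | ¬ t ∈ Set.Icc 0 b} ≤ μ (Set.Iio 0 ∪ Set.Ioi b) := measure_mono hcompl
    _ ≤ μ (Set.Iio 0) + μ (Set.Ioi b) := measure_union_le _ _
    _ = 0 := by rw [hlow, hhigh]; simp
  -- denominators positive on [0,b]
  have hden : ∀ t ∈ Set.Icc (0:ℝ) b, 0 < x ^ 2 - t ^ 2 := by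
    intro t ht
    have h1 : t < x := lt_of_le_of_lt ht.2 hx
    nlinarith [ht.1]
  have hdenb : 0 < x ^ 2 - b ^ 2 := by nlinarith
  -- the three key functions
  set F : ℝ → ℝ := fun t => x / (x ^ 2 - t ^ 2) with hF
  set G : ℝ → ℝ := fun t => (x ^ 2 + t ^ 2) / (x ^ 2 - t ^ 2) ^ 2 with hG
  set H : ℝ → ℝ := fun t => (x ^ 2 + t ^ 2) ^ 2 / (x * (x ^ 2 - t ^ 2) ^ 3) with hH
  -- integrability of continuous-on-[0,b] functions
  have hrestrict : μ.restrict (Set.Icc 0 b) = μ :=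
    Measure.restrict_eq_self_of_ae_mem hae
  have hint : ∀ f : ℝ → ℝ, ContinuousOn f (Set.Icc 0 b) → Integrable f μ := by
    intro f hf
    have := hf.integrableOn_compact (μ := μ) isCompact_Icc
    rwa [IntegrableOn, hrestrict] at this
  have hcden : ∀ t ∈ Set.Icc (0:ℝ) b, x ^ 2 - t ^ 2 ≠ 0 := fun t ht => (hden t ht).ne'
  have hintF : Integrable F μ := by
    apply hint
    exact ContinuousOn.div continuousOn_const (by fun_prop) fun t ht => hcden t ht
  have hintG : Integrable G μ := by
    apply hint
    exact ContinuousOn.div (by fun_prop) (by fun_prop) fun t ht => pow_ne_zero _ (hcden t ht)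
  have hintH : Integrable H μ := by
    apply hint
    exact ContinuousOn.div (by fun_prop) (by fun_prop)
      fun t ht => mul_ne_zero hx0.ne' (pow_ne_zero _ (hcden t ht))
  have hintA : Integrable (fun t => x * (x ^ 2 + 3 * t ^ 2) / (x ^ 2 - t ^ 2) ^ 3) μ := by
    apply hint
    exact ContinuousOn.div (by fun_prop) (by fun_prop) fun t ht => pow_ne_zero _ (hcden t ht)
  have hintB : Integrable (fun t => (t ^ 2 / x) / (x ^ 2 - t ^ 2) ^ 2) μ := by
    apply hint
    exact ContinuousOn.div (by fun_prop) (by fun_prop) fun t ht => pow_ne_zero _ (hcden t ht)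
  -- nonnegativity a.e.
  have hFnn : 0 ≤ᵐ[μ] F := by
    filter_upwards [hae] with t ht
    exact div_nonneg hx0.le (hden t ht).le
  have hHnn : 0 ≤ᵐ[μ] H := by
    filter_upwards [hae] with t ht
    exact div_nonneg (sq_nonneg _) (mul_nonneg hx0.le (pow_nonneg (hden t ht).le _))
  have hGnn : 0 ≤ᵐ[μ] G := by
    filter_upwards [hae] with t ht
    exact div_nonneg (by positivity) (pow_nonneg (hden t ht).le _)
  -- G = √F * √H  a.e.
  have hGsq : G =ᵐ[μ] fun t => Real.sqrt (F t) * Real.sqrt (H t) := by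
    filter_upwards [hae] with t ht
    have h1 : 0 < x ^ 2 - t ^ 2 := hden t ht
    have hFH : F t * H t = G t ^ 2 := by
      simp only [hF, hG, hH]
      field_simp
    have hGt : 0 ≤ G t := div_nonneg (by positivity) (pow_nonneg h1.le _)
    rw [← Real.sqrt_mul (div_nonneg hx0.le h1.le), hFH, Real.sqrt_sq hGt]
  -- Memℒp 2 for √F and √H
  have hmem : ∀ f : ℝ → ℝ, Integrable f μ → 0 ≤ᵐ[μ] f →
      (∀ᵐ t ∂μ, f t ≤ (x / (x ^ 2 - b ^ 2)) ^ 2 + (x ^ 2 + b ^ 2) ^ 2 / (x * (x ^ 2 - b ^ 2) ^ 3) + 1) →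
      MemLp (fun t => Real.sqrt (f t)) (ENNReal.ofReal 2) μ := by
    intro f hf hfnn hfb
    refine MemLp.of_bound ((Real.continuous_sqrt.comp_aestronglyMeasurable hf.1))
      (Real.sqrt ((x / (x ^ 2 - b ^ 2)) ^ 2 + (x ^ 2 + b ^ 2) ^ 2 / (x * (x ^ 2 - b ^ 2) ^ 3) + 1)) ?_
    filter_upwards [hfnn, hfb] with t h1 h2
    rw [Real.norm_of_nonneg (Real.sqrt_nonneg _)]
    exact Real.sqrt_le_sqrt h2
  set C : ℝ := (x / (x ^ 2 - b ^ 2)) ^ 2 + (x ^ 2 + b ^ 2) ^ 2 / (x * (x ^ 2 - b ^ 2) ^ 3) + 1 with hC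
  have hFbd : ∀ᵐ t ∂μ, F t ≤ C := by
    filter_upwards [hae] with t ht
    have h1 : 0 < x ^ 2 - t ^ 2 := hden t ht
    have h2 : x ^ 2 - b ^ 2 ≤ x ^ 2 - t ^ 2 := by nlinarith [ht.1, ht.2]
    have h3 : F t ≤ x / (x ^ 2 - b ^ 2) := div_le_div_of_nonneg_left hx0.le hdenb h2 |>.trans_eq rfl
    have hc1 : (0:ℝ) ≤ (x / (x ^ 2 - b ^ 2)) := div_nonneg hx0.le hdenb.le
    rw [hC]
    nlinarith [div_nonneg (sq_nonneg (x^2+b^2)) (mul_nonneg hx0.le (pow_nonneg hdenb.le 3)),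
      sq_nonneg (x / (x ^ 2 - b ^ 2) - 1)]
  have hHbd : ∀ᵐ t ∂μ, H t ≤ C := by
    filter_upwards [hae] with t ht
    have h1 : 0 < x ^ 2 - t ^ 2 := hden t ht
    have h2 : x ^ 2 - b ^ 2 ≤ x ^ 2 - t ^ 2 := by nlinarith [ht.1, ht.2]
    have hnum : (x ^ 2 + t ^ 2) ^ 2 ≤ (x ^ 2 + b ^ 2) ^ 2 := by nlinarith [ht.1, ht.2]
    have hd : x * (x ^ 2 - b ^ 2) ^ 3 ≤ x * (x ^ 2 - t ^ 2) ^ 3 := by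
      have := pow_le_pow_left₀ hdenb.le h2 3
      nlinarith
    have hstep : H t ≤ (x ^ 2 + b ^ 2) ^ 2 / (x * (x ^ 2 - b ^ 2) ^ 3) := by
      apply div_le_div₀ (sq_nonneg _) hnum (by positivity) hd
    rw [hC]
    nlinarith [sq_nonneg (x / (x ^ 2 - b ^ 2))]
  have hmemF := hmem F hintF hFnn hFbd
  have hmemH := hmem H hintH hHnn hHbd
  -- Cauchy–Schwarz
  have hpq : Real.HolderConjugate 2 2 := by constructor <;> norm_num
  have hCS := integral_mul_le_Lp_mul_Lq_of_nonneg hpq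
    (f := fun t => Real.sqrt (F t)) (g := fun t => Real.sqrt (H t))
    (Filter.Eventually.of_forall fun t => Real.sqrt_nonneg _)
    (Filter.Eventually.of_forall fun t => Real.sqrt_nonneg _) hmemF hmemH
  -- rewrite the squares in hCS
  have hsqF : (∫ t, Real.sqrt (F t) ^ (2:ℝ) ∂μ) = ∫ t, F t ∂μ := by
    refine integral_congr_ae ?_
    filter_upwards [hFnn] with t ht
    rw [show ((2:ℝ)) = ((2:ℕ):ℝ) by norm_num, Real.rpow_natCast, Real.sq_sqrt ht]
  have hsqH : (∫ t, Real.sqrt (H t) ^ (2:ℝ) ∂μ) = ∫ t, H t ∂μ := by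
    refine integral_congr_ae ?_
    filter_upwards [hHnn] with t ht
    rw [show ((2:ℝ)) = ((2:ℕ):ℝ) by norm_num, Real.rpow_natCast, Real.sq_sqrt ht]
  rw [hsqF, hsqH] at hCS
  have hGint : (∫ t, G t ∂μ) = ∫ t, Real.sqrt (F t) * Real.sqrt (H t) ∂μ :=
    integral_congr_ae hGsq
  have hintFnn : 0 ≤ ∫ t, F t ∂μ := integral_nonneg_of_ae hFnn
  have hintHnn : 0 ≤ ∫ t, H t ∂μ := integral_nonneg_of_ae hHnn
  have hintGnn : 0 ≤ ∫ t, G t ∂μ := integral_nonneg_of_ae hGnn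
  -- key inequality: (∫G)² ≤ (∫F)(∫H)
  have hkey : (∫ t, G t ∂μ) ^ 2 ≤ (∫ t, F t ∂μ) * (∫ t, H t ∂μ) := by
    have h1 : (∫ t, G t ∂μ) ≤ (∫ t, F t ∂μ) ^ ((1:ℝ)/2) * (∫ t, H t ∂μ) ^ ((1:ℝ)/2) := by
      rw [hGint]; exact hCS
    have h2 : ((∫ t, F t ∂μ) ^ ((1:ℝ)/2) * (∫ t, H t ∂μ) ^ ((1:ℝ)/2)) ^ 2
        = (∫ t, F t ∂μ) * (∫ t, H t ∂μ) := by
      rw [mul_pow, ← Real.rpow_natCast ((∫ t, F t ∂μ) ^ ((1:ℝ)/2)) 2,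
        ← Real.rpow_natCast ((∫ t, H t ∂μ) ^ ((1:ℝ)/2)) 2,
        ← Real.rpow_mul hintFnn, ← Real.rpow_mul hintHnn]
      norm_num
    calc (∫ t, G t ∂μ) ^ 2 ≤ ((∫ t, F t ∂μ) ^ ((1:ℝ)/2) * (∫ t, H t ∂μ) ^ ((1:ℝ)/2)) ^ 2 := by
          apply pow_le_pow_left₀ hintGnn h1
    _ = _ := h2
  -- rewrite the statement
  have hL : phiOne' μ x ^ 2 = (∫ t, G t ∂μ) ^ 2 := by
    rw [show phiOne' μ x = -∫ t, G t ∂μ from rfl, neg_sq]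
  have hR : phiOne'' μ x - 2 * (∫ t, (t ^ 2 / x) / (x ^ 2 - t ^ 2) ^ 2 ∂μ) = 2 * ∫ t, H t ∂μ := by
    rw [phiOne'', ← mul_sub, ← integral_sub hintA hintB]
    congr 1
    refine integral_congr_ae ?_
    filter_upwards [hae] with t ht
    have h1 : x ^ 2 - t ^ 2 ≠ 0 := (hden t ht).ne'
    simp only [hH]
    field_simp
    ring
  have hphi : phiOne μ x = ∫ t, F t ∂μ := rfl
  rw [hphi, hR, hL]
  have hrr : (∫ t, F t ∂μ) * (2 * ∫ t, H t ∂μ) = 2 * ((∫ t, F t ∂μ) * ∫ t, H t ∂μ) := by ring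
  rw [hrr]
  linarith [hkey]
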